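/- arXiv:1106.6343 — 3 statements merged into one kernel-verified Lean document; each statement's English description precedes it below -/
import Mathlib

section
/- For every α ∈ K^I such that the curve C_α is singular, there exists β ∈ K^I with β ≠ α such that for every point γ on the line L = {α + t(β−α) : t ∈ K} through α and β the curve C_γ is singular. -/
open MvPolynomial

/-- The index set `I` of pairs `(ν,μ)` of nonnegative integers with `νp + μq < pq`
(for `p, q ≥ 1` the conditions `ν < q`, `μ < p` are automatic). -/
def idxSet (p q : ℕ) : Finset (ℕ × ℕ) :=
  (Finset.range q ×ˢ Finset.range p).filter fun t => t.1 * p + t.2 * q < p * q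

/-- The normed Weierstraß polynomial `F_α = Y^p − X^q + Σ a_{νμ} X^ν Y^μ`,
as a polynomial in two variables `X 0 = X`, `X 1 = Y`. -/
noncomputable def wPoly (K : Type) [CommRing K] (p q : ℕ) (a : idxSet p q → K) :
    MvPolynomial (Fin 2) K :=
  X 1 ^ p - X 0 ^ q + ∑ i : idxSet p q, C (a i) * X 0 ^ (i : ℕ × ℕ).1 * X 1 ^ (i : ℕ × ℕ).2

/-- The Hessian determinant `G_{XX} G_{YY} − G_{XY}²` of a polynomial in `X, Y`. -/
noncomputable def hessPoly (K : Type) [CommRing K] (G : MvPolynomial (Fin 2) K) :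
    MvPolynomial (Fin 2) K :=
  pderiv 0 (pderiv 0 G) * pderiv 1 (pderiv 1 G) - (pderiv 0 (pderiv 1 G)) ^ 2

/-- `P` is a singular point of the curve `G = 0`. -/
def IsSingAt (K : Type) [CommRing K] (G : MvPolynomial (Fin 2) K) (P : K × K) : Prop :=
  eval ![P.1, P.2] G = 0 ∧ eval ![P.1, P.2] (pderiv 0 G) = 0 ∧ eval ![P.1, P.2] (pderiv 1 G) = 0

/-- **Corollary 1.9.** Through every point `α` of the hypersurface of singular curves of type
`p,q` there is a line entirely contained in it: if `C_α` is singular, there is `β ≠ α` such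
that `C_γ` is singular for every `γ` on the line through `α` and `β`. -/
theorem line_through_singular_curve_in_hypersurface
    (K : Type) [Field K] [IsAlgClosed K] [CharZero K]
    (p q : ℕ) (hp : 1 < p) (hpq : p < q) (hco : Nat.Coprime p q)
    (α : idxSet p q → K)
    (hαsing : ∃ P : K × K, IsSingAt K (wPoly K p q α) P) :
    ∃ β : idxSet p q → K, β ≠ α ∧
      ∀ t : K, ∃ P : K × K,
        IsSingAt K (wPoly K p q fun i => α i + t * (β i - α i)) P := by
  obtain ⟨⟨x, y⟩, h0, h1, h2⟩ := hαsing
  have hm0 : ((0, 0) : ℕ × ℕ) ∈ idxSet p q := by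
    simp only [idxSet, Finset.mem_filter, Finset.mem_product, Finset.mem_range]
    exact ⟨⟨by omega, by omega⟩, by nlinarith⟩
  have hm1 : ((1, 0) : ℕ × ℕ) ∈ idxSet p q := by
    simp only [idxSet, Finset.mem_filter, Finset.mem_product, Finset.mem_range]
    exact ⟨⟨by omega, by omega⟩, by nlinarith⟩
  have hm2 : ((2, 0) : ℕ × ℕ) ∈ idxSet p q := by
    simp only [idxSet, Finset.mem_filter, Finset.mem_product, Finset.mem_range]
    exact ⟨⟨by omega, by omega⟩, by nlinarith⟩
  set e0 : {i // i ∈ idxSet p q} := ⟨(0, 0), hm0⟩ with he0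
  set e1 : {i // i ∈ idxSet p q} := ⟨(1, 0), hm1⟩ with he1
  set e2 : {i // i ∈ idxSet p q} := ⟨(2, 0), hm2⟩ with he2
  have h01 : e0 ≠ e1 := by simp [he0, he1, Subtype.ext_iff, Prod.ext_iff]
  have h02 : e0 ≠ e2 := by simp [he0, he2, Subtype.ext_iff, Prod.ext_iff]
  have h12 : e1 ≠ e2 := by simp [he1, he2, Subtype.ext_iff, Prod.ext_iff]
  set δ : {i // i ∈ idxSet p q} → K := fun i =>
    (if i = e0 then x ^ 2 else 0) + (if i = e1 then -(2 * x) else 0)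
      + (if i = e2 then 1 else 0) with hδ
  have hδ2 : δ e2 = 1 := by simp [hδ, h02.symm, h12.symm]
  -- generic weighted sum of δ
  have hδsum : ∀ c : {i // i ∈ idxSet p q} → K,
      (∑ i : idxSet p q, δ i * c i) = x ^ 2 * c e0 + -(2 * x) * c e1 + c e2 := by
    intro c
    have hterm : ∀ i : {i // i ∈ idxSet p q}, δ i * c i
        = ((if i = e0 then x ^ 2 * c i else 0) + if i = e1 then -(2 * x) * c i else 0)
          + if i = e2 then c i else 0 := by
      intro i
      simp only [hδ, add_mul, ite_mul, zero_mul, one_mul]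
    rw [Finset.sum_congr rfl fun i _ => hterm i, Finset.sum_add_distrib,
      Finset.sum_add_distrib, Finset.sum_ite_eq' Finset.univ e0,
      Finset.sum_ite_eq' Finset.univ e1, Finset.sum_ite_eq' Finset.univ e2]
    simp
  -- expansions of the three functionals
  have expand0 : ∀ γ : idxSet p q → K, eval ![x, y] (wPoly K p q γ)
      = eval ![x, y] ((X 1 : MvPolynomial (Fin 2) K) ^ p - X 0 ^ q)
        + ∑ i : idxSet p q, γ i
            * eval ![x, y] ((X 0 : MvPolynomial (Fin 2) K) ^ (i : ℕ × ℕ).1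
                * X 1 ^ (i : ℕ × ℕ).2) := by
    intro γ
    rw [wPoly, map_add, map_sum]
    congr 1
    refine Finset.sum_congr rfl fun i _ => ?_
    rw [mul_assoc, eval_mul, eval_C]
  have expand1 : ∀ (k : Fin 2) (γ : idxSet p q → K),
      eval ![x, y] (pderiv k (wPoly K p q γ))
      = eval ![x, y] (pderiv k ((X 1 : MvPolynomial (Fin 2) K) ^ p - X 0 ^ q))
        + ∑ i : idxSet p q, γ i
            * eval ![x, y] (pderiv k ((X 0 : MvPolynomial (Fin 2) K) ^ (i : ℕ × ℕ).1
                * X 1 ^ (i : ℕ × ℕ).2)) := by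
    intro k γ
    rw [wPoly, map_add, map_add, map_sum, map_sum]
    congr 1
    refine Finset.sum_congr rfl fun i _ => ?_
    rw [mul_assoc, pderiv_C_mul, eval_mul, eval_C]
  -- splitting the coefficient sum along the line
  have hsplit : ∀ (t : K) (c : {i // i ∈ idxSet p q} → K),
      (∑ i : idxSet p q, (α i + t * δ i) * c i)
      = (∑ i : idxSet p q, α i * c i) + t * ∑ i : idxSet p q, δ i * c i := by
    intro t c
    rw [Finset.mul_sum, ← Finset.sum_add_distrib]
    exact Finset.sum_congr rfl fun i _ => by ring
  -- values of the relevant monomials and their derivatives at (x,y)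
  have v00 : eval ![x, y] ((X 0 : MvPolynomial (Fin 2) K) ^ (e0 : ℕ × ℕ).1
      * X 1 ^ (e0 : ℕ × ℕ).2) = 1 := by simp [he0]
  have v01 : eval ![x, y] ((X 0 : MvPolynomial (Fin 2) K) ^ (e1 : ℕ × ℕ).1
      * X 1 ^ (e1 : ℕ × ℕ).2) = x := by simp [he1]
  have v02 : eval ![x, y] ((X 0 : MvPolynomial (Fin 2) K) ^ (e2 : ℕ × ℕ).1
      * X 1 ^ (e2 : ℕ × ℕ).2) = x ^ 2 := by simp [he2, pow_two]
  have d00 : eval ![x, y] (pderiv 0 ((X 0 : MvPolynomial (Fin 2) K) ^ (e0 : ℕ × ℕ).1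
      * X 1 ^ (e0 : ℕ × ℕ).2)) = 0 := by simp [he0]
  have d01 : eval ![x, y] (pderiv 0 ((X 0 : MvPolynomial (Fin 2) K) ^ (e1 : ℕ × ℕ).1
      * X 1 ^ (e1 : ℕ × ℕ).2)) = 1 := by simp [he1, pderiv_X]
  have d02 : eval ![x, y] (pderiv 0 ((X 0 : MvPolynomial (Fin 2) K) ^ (e2 : ℕ × ℕ).1
      * X 1 ^ (e2 : ℕ × ℕ).2)) = 2 * x := by
    simp [he2, pow_two, pderiv_mul, pderiv_X]; ring
  have f00 : eval ![x, y] (pderiv 1 ((X 0 : MvPolynomial (Fin 2) K) ^ (e0 : ℕ × ℕ).1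
      * X 1 ^ (e0 : ℕ × ℕ).2)) = 0 := by simp [he0]
  have f01 : eval ![x, y] (pderiv 1 ((X 0 : MvPolynomial (Fin 2) K) ^ (e1 : ℕ × ℕ).1
      * X 1 ^ (e1 : ℕ × ℕ).2)) = 0 := by simp [he1, pderiv_X]
  have f02 : eval ![x, y] (pderiv 1 ((X 0 : MvPolynomial (Fin 2) K) ^ (e2 : ℕ × ℕ).1
      * X 1 ^ (e2 : ℕ × ℕ).2)) = 0 := by simp [he2, pow_two, pderiv_mul, pderiv_X]
  refine ⟨fun i => α i + δ i, ?_, ?_⟩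
  · intro hβ
    have := congrFun hβ e2
    rw [hδ2] at this
    simp at this
  · intro t
    have harg : (fun i => α i + t * ((α i + δ i) - α i)) = fun i => α i + t * δ i := by
      funext i; ring
    refine ⟨(x, y), ?_, ?_, ?_⟩
    · show eval ![x, y] (wPoly K p q fun i => α i + t * ((α i + δ i) - α i)) = 0
      have hα := expand0 α
      rw [h0] at hα
      rw [harg, expand0, hsplit, hδsum]
      rw [v00, v01, v02]
      linear_combination -hα
    · show eval ![x, y] (pderiv 0 (wPoly K p q fun i => α i + t * ((α i + δ i) - α i))) = 0
      have hα := expand1 0 α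
      rw [h1] at hα
      rw [harg, expand1 0, hsplit, hδsum]
      rw [d00, d01, d02]
      linear_combination -hα
    · show eval ![x, y] (pderiv 1 (wPoly K p q fun i => α i + t * ((α i + δ i) - α i))) = 0
      have hα := expand1 1 α
      rw [h2] at hα
      rw [harg, expand1 1, hsplit, hδsum]
      rw [f00, f01, f02]
      linear_combination -hα
end

section
/- Let α ∈ ℂ^I be such that C_α is a nodal curve with exactly l ≥ 1 nodes P_1,…,P_l, and let S = {(β,x,y) ∈ ℂ^I × ℂ² : F_β(x,y) = (F_β)_X(x,y) = (F_β)_Y(x,y) = 0} with the subspace topology, and let π : S → ℂ^I be the projection (β,x,y) ↦ β. Then for every δ > 0 there exist ε > 0 and pairwise disjoint open subsets U_1,…,U_l of S with (α,P_i) ∈ U_i such that π⁻¹({β : ‖β−α‖ < ε}) = U_1 ∪ ⋯ ∪ U_l and U_i ⊆ {(β,x,y) : ‖β−α‖ < ε and ‖(x,y) − P_i‖ < δ} for i = 1,…,l. -/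
set_option maxHeartbeats 1000000


open MvPolynomial

/-- `P` is a node of the curve `G = 0`. -/
def IsNodeAt (K : Type) [CommRing K] (G : MvPolynomial (Fin 2) K) (P : K × K) : Prop :=
  IsSingAt K G P ∧ eval ![P.1, P.2] (hessPoly K G) ≠ 0

/-- The incidence manifold `S = {(β,x,y) : F_β(x,y) = (F_β)_X(x,y) = (F_β)_Y(x,y) = 0}`. -/
def incSet (p q : ℕ) : Set ((EuclideanSpace ℂ ↥(idxSet p q)) × EuclideanSpace ℂ (Fin 2)) :=
  {s | IsSingAt ℂ (wPoly ℂ p q fun i => s.1 i) (s.2 0, s.2 1)}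



section AuxLemmas
open Metric Set

lemma eval_wPoly {p q : ℕ} (a : idxSet p q → ℂ) (x y : ℂ) :
    eval ![x,y] (wPoly ℂ p q a)
      = y^p - x^q + ∑ i : idxSet p q, a i * x ^ (i : ℕ×ℕ).1 * y ^ (i : ℕ×ℕ).2 := by
  simp [wPoly]

lemma eval_pderiv0_wPoly {p q : ℕ} (a : idxSet p q → ℂ) (x y : ℂ) :
    eval ![x,y] (pderiv 0 (wPoly ℂ p q a))
      = - (q:ℂ) * x^(q-1) + ∑ i : idxSet p q,
          a i * (i : ℕ×ℕ).1 * x ^ ((i : ℕ×ℕ).1 - 1) * y ^ (i : ℕ×ℕ).2 := by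
  simp [wPoly, pderiv_pow, pderiv_mul, pderiv_X, Finset.mul_sum]
  exact Finset.sum_congr rfl fun i _ => by ring

lemma eval_pderiv1_wPoly {p q : ℕ} (a : idxSet p q → ℂ) (x y : ℂ) :
    eval ![x,y] (pderiv 1 (wPoly ℂ p q a))
      = (p:ℂ) * y^(p-1) + ∑ i : idxSet p q,
          a i * (i : ℕ×ℕ).2 * x ^ (i : ℕ×ℕ).1 * y ^ ((i : ℕ×ℕ).2 - 1) := by
  simp [wPoly, pderiv_pow, pderiv_mul, pderiv_X, Finset.mul_sum]
  exact Finset.sum_congr rfl fun i _ => by ring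

lemma idx_mem {p q : ℕ} (i : idxSet p q) :
    (i : ℕ×ℕ).1 < q ∧ (i : ℕ×ℕ).2 < p ∧ (i : ℕ×ℕ).1 * p + (i : ℕ×ℕ).2 * q < p * q := by
  have := i.2
  simp only [idxSet, Finset.mem_filter, Finset.mem_product, Finset.mem_range] at this
  tauto

lemma sub_helper (p q : ℕ) (hp : 1 ≤ p) (hq : 2 ≤ q) :
    (q-1)*p = p*q - p ∧ 1 ≤ p*q - p := by
  obtain ⟨r, hr⟩ : ∃ r, q = r + 2 := ⟨q - 2, by omega⟩
  subst hr
  have h1 : p*(r+2) = (r+1)*p + p := by ring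
  constructor
  · rw [h1, Nat.add_sub_cancel]
    have h2 : r+2-1 = r+1 := by omega
    rw [h2]
  · rw [h1, Nat.add_sub_cancel]
    exact Nat.one_le_iff_ne_zero.mpr (Nat.mul_ne_zero (by omega) (by omega))

lemma omega_aux (p a b m : ℕ) (h : p + a + b < m) : a + b ≤ m - p - 1 := by omega

lemma core_pow (p q : ℕ) (u v t : ℝ) (hu : 0 ≤ u) (hv : 0 ≤ v) (ht : 1 ≤ t)
    (hut : u ^ q ≤ t) (hvt : v ^ p ≤ t) (e f E : ℕ) (hE : e * p + f * q ≤ E) :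
    (u ^ e * v ^ f) ^ (p * q) ≤ t ^ E := by
  have ht0 : (0:ℝ) ≤ t := le_trans zero_le_one ht
  have e1 : e*(p*q) = q*(e*p) := by ring
  have e2 : f*(p*q) = p*(f*q) := by ring
  rw [mul_pow, ← pow_mul, ← pow_mul, e1, e2, pow_mul u q, pow_mul v p]
  calc (u^q)^(e*p) * (v^p)^(f*q)
      ≤ t^(e*p) * t^(f*q) :=
        mul_le_mul (pow_le_pow_left₀ (pow_nonneg hu q) hut _)
          (pow_le_pow_left₀ (pow_nonneg hv p) hvt _)
          (pow_nonneg (pow_nonneg hv p) _) (pow_nonneg ht0 _)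
    _ = t ^ (e*p + f*q) := (pow_add t _ _).symm
    _ ≤ t ^ E := pow_le_pow_right₀ ht hE

lemma critBound (p q : ℕ) (hp : 1 < p) (hpq : p < q)
    (A : ℝ) (hA : 1 ≤ A) (a : idxSet p q → ℂ) (ha : ∀ i, ‖a i‖ ≤ A) (x y : ℂ)
    (h0 : eval ![x,y] (pderiv 0 (wPoly ℂ p q a)) = 0)
    (h1 : eval ![x,y] (pderiv 1 (wPoly ℂ p q a)) = 0) :
    ‖x‖ ≤ (((idxSet p q).card + 1 : ℝ) * (q * A)) ^ (p * q) ∧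
    ‖y‖ ≤ (((idxSet p q).card + 1 : ℝ) * (q * A)) ^ (p * q) := by
  have hq1 : (1:ℕ) ≤ q := le_of_lt (lt_trans hp hpq)
  have hp1 : (1:ℕ) ≤ p := le_of_lt hp
  set n₀ : ℕ := (idxSet p q).card with hn₀
  set c : ℝ := (n₀ + 1 : ℝ) with hcdef
  have hc1 : (1:ℝ) ≤ c := by
    have : (0:ℝ) ≤ (n₀:ℝ) := Nat.cast_nonneg _
    rw [hcdef]; linarith
  set N : ℕ := p * q with hNdef
  have hN1 : 1 ≤ N := Nat.one_le_iff_ne_zero.mpr (by positivity)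
  set K : ℝ := (c * (q * A)) ^ N with hKdef
  have hqA : (1:ℝ) ≤ q * A := by
    have : (1:ℝ) ≤ (q:ℝ) := by exact_mod_cast hq1
    nlinarith
  have hK1 : (1:ℝ) ≤ K := one_le_pow₀ (by nlinarith)
  set t : ℝ := max 1 (max (‖x‖^q) (‖y‖^p)) with htdef
  have ht1 : (1:ℝ) ≤ t := le_max_left _ _
  have ht0 : (0:ℝ) < t := lt_of_lt_of_le one_pos ht1
  have hxt : ‖x‖^q ≤ t := le_trans (le_max_left _ _) (le_max_right _ _)
  have hyt : ‖y‖^p ≤ t := le_trans (le_max_right _ _) (le_max_right _ _)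
  -- the two sum inequalities
  have hxineq : (q:ℝ) * ‖x‖^(q-1) ≤
      ∑ i : idxSet p q, ‖a i‖ * ((i:ℕ×ℕ).1 : ℝ) * ‖x‖^((i:ℕ×ℕ).1 - 1) * ‖y‖^(i:ℕ×ℕ).2 := by
    have he : (q:ℂ) * x^(q-1) =
        ∑ i : idxSet p q, a i * ((i:ℕ×ℕ).1 : ℂ) * x^((i:ℕ×ℕ).1 - 1) * y^(i:ℕ×ℕ).2 := by
      have h := h0
      rw [eval_pderiv0_wPoly] at h
      linear_combination -h
    calc (q:ℝ) * ‖x‖^(q-1) = ‖(q:ℂ) * x^(q-1)‖ := by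
          rw [norm_mul, norm_pow, Complex.norm_natCast]
      _ = ‖∑ i : idxSet p q, a i * ((i:ℕ×ℕ).1 : ℂ) * x^((i:ℕ×ℕ).1 - 1) * y^(i:ℕ×ℕ).2‖ := by
          rw [he]
      _ ≤ ∑ i : idxSet p q, ‖a i * ((i:ℕ×ℕ).1 : ℂ) * x^((i:ℕ×ℕ).1 - 1) * y^(i:ℕ×ℕ).2‖ :=
          norm_sum_le _ _
      _ = _ := Finset.sum_congr rfl fun i _ => by
          rw [norm_mul, norm_mul, norm_mul, norm_pow, norm_pow, Complex.norm_natCast]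
  have hyineq : (p:ℝ) * ‖y‖^(p-1) ≤
      ∑ i : idxSet p q, ‖a i‖ * ((i:ℕ×ℕ).2 : ℝ) * ‖x‖^(i:ℕ×ℕ).1 * ‖y‖^((i:ℕ×ℕ).2 - 1) := by
    have he : (p:ℂ) * y^(p-1) =
        - ∑ i : idxSet p q, a i * ((i:ℕ×ℕ).2 : ℂ) * x^(i:ℕ×ℕ).1 * y^((i:ℕ×ℕ).2 - 1) := by
      have h := h1
      rw [eval_pderiv1_wPoly] at h
      linear_combination h
    calc (p:ℝ) * ‖y‖^(p-1) = ‖(p:ℂ) * y^(p-1)‖ := by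
          rw [norm_mul, norm_pow, Complex.norm_natCast]
      _ = ‖∑ i : idxSet p q, a i * ((i:ℕ×ℕ).2 : ℂ) * x^(i:ℕ×ℕ).1 * y^((i:ℕ×ℕ).2 - 1)‖ := by
          rw [he, norm_neg]
      _ ≤ ∑ i : idxSet p q, ‖a i * ((i:ℕ×ℕ).2 : ℂ) * x^(i:ℕ×ℕ).1 * y^((i:ℕ×ℕ).2 - 1)‖ :=
          norm_sum_le _ _
      _ = _ := Finset.sum_congr rfl fun i _ => by
          rw [norm_mul, norm_mul, norm_mul, norm_pow, norm_pow, Complex.norm_natCast]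
  
  -- per-term bounds
  have htermx : ∀ i : idxSet p q,
      (‖a i‖ * ((i:ℕ×ℕ).1 : ℝ) * ‖x‖^((i:ℕ×ℕ).1 - 1) * ‖y‖^(i:ℕ×ℕ).2) ^ N
        ≤ ((q:ℝ) * A) ^ N * t ^ (N - p - 1) := by
    intro i
    obtain ⟨hiq, hip, hiw⟩ := idx_mem i
    rcases Nat.eq_zero_or_pos (i:ℕ×ℕ).1 with hz | hpos
    · rw [hz]
      simp only [Nat.cast_zero, mul_zero, zero_mul]
      rw [zero_pow (by omega : N ≠ 0)]
      positivity
    · have h1' : ‖a i‖ * ((i:ℕ×ℕ).1 : ℝ) ≤ (q:ℝ) * A := by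
        have hc : ((i:ℕ×ℕ).1 : ℝ) ≤ (q:ℝ) := by exact_mod_cast le_of_lt hiq
        have h0a := norm_nonneg (a i)
        have hqr : (0:ℝ) ≤ (q:ℝ) := Nat.cast_nonneg _
        nlinarith [ha i, Nat.cast_nonneg (α := ℝ) (i:ℕ×ℕ).1]
      have hνk : (i:ℕ×ℕ).1 = 1 + ((i:ℕ×ℕ).1 - 1) := by omega
      have hE : ((i:ℕ×ℕ).1 - 1)*p + (i:ℕ×ℕ).2*q ≤ N - p - 1 := by
        apply omega_aux
        calc p + ((i:ℕ×ℕ).1 - 1)*p + (i:ℕ×ℕ).2*q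
            = (1 + ((i:ℕ×ℕ).1 - 1))*p + (i:ℕ×ℕ).2*q := by ring
          _ = (i:ℕ×ℕ).1 * p + (i:ℕ×ℕ).2*q := by rw [← hνk]
          _ < p*q := hiw
      have h2' : (‖x‖^((i:ℕ×ℕ).1 - 1) * ‖y‖^(i:ℕ×ℕ).2) ^ (p*q) ≤ t ^ (N - p - 1) :=
        core_pow p q _ _ t (norm_nonneg x) (norm_nonneg y) ht1 hxt hyt _ _ _ hE
      calc (‖a i‖ * ((i:ℕ×ℕ).1:ℝ) * ‖x‖^((i:ℕ×ℕ).1-1) * ‖y‖^(i:ℕ×ℕ).2) ^ N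
          = (‖a i‖ * ((i:ℕ×ℕ).1:ℝ))^N * (‖x‖^((i:ℕ×ℕ).1-1) * ‖y‖^(i:ℕ×ℕ).2)^N := by
            rw [← mul_pow]; ring_nf
        _ ≤ ((q:ℝ)*A)^N * t^(N-p-1) :=
            mul_le_mul (pow_le_pow_left₀ (by positivity) h1' _) h2'
              (by positivity) (by positivity)
  have htermy : ∀ i : idxSet p q,
      (‖a i‖ * ((i:ℕ×ℕ).2 : ℝ) * ‖x‖^(i:ℕ×ℕ).1 * ‖y‖^((i:ℕ×ℕ).2 - 1)) ^ N
        ≤ ((p:ℝ) * A) ^ N * t ^ (N - q - 1) := by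
    intro i
    obtain ⟨hiq, hip, hiw⟩ := idx_mem i
    rcases Nat.eq_zero_or_pos (i:ℕ×ℕ).2 with hz | hpos
    · rw [hz]
      simp only [Nat.cast_zero, mul_zero, zero_mul]
      rw [zero_pow (by omega : N ≠ 0)]
      positivity
    · have h1' : ‖a i‖ * ((i:ℕ×ℕ).2 : ℝ) ≤ (p:ℝ) * A := by
        have hc : ((i:ℕ×ℕ).2 : ℝ) ≤ (p:ℝ) := by exact_mod_cast le_of_lt hip
        have h0a := norm_nonneg (a i)
        nlinarith [ha i, Nat.cast_nonneg (α := ℝ) (i:ℕ×ℕ).2]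
      have hνk : (i:ℕ×ℕ).2 = 1 + ((i:ℕ×ℕ).2 - 1) := by omega
      have hE : (i:ℕ×ℕ).1*p + ((i:ℕ×ℕ).2 - 1)*q ≤ N - q - 1 := by
        have := omega_aux q ((i:ℕ×ℕ).1*p) (((i:ℕ×ℕ).2 - 1)*q) (p*q) (by
          calc q + (i:ℕ×ℕ).1*p + ((i:ℕ×ℕ).2 - 1)*q
              = (i:ℕ×ℕ).1*p + (1 + ((i:ℕ×ℕ).2 - 1))*q := by ring
            _ = (i:ℕ×ℕ).1 * p + (i:ℕ×ℕ).2*q := by rw [← hνk]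
            _ < p*q := hiw)
        omega
      have h2' : (‖x‖^(i:ℕ×ℕ).1 * ‖y‖^((i:ℕ×ℕ).2 - 1)) ^ (p*q) ≤ t ^ (N - q - 1) :=
        core_pow p q _ _ t (norm_nonneg x) (norm_nonneg y) ht1 hxt hyt _ _ _ hE
      calc (‖a i‖ * ((i:ℕ×ℕ).2:ℝ) * ‖x‖^(i:ℕ×ℕ).1 * ‖y‖^((i:ℕ×ℕ).2-1)) ^ N
          = (‖a i‖ * ((i:ℕ×ℕ).2:ℝ))^N * (‖x‖^(i:ℕ×ℕ).1 * ‖y‖^((i:ℕ×ℕ).2-1))^N := by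
            rw [← mul_pow]; ring_nf
        _ ≤ ((p:ℝ)*A)^N * t^(N-q-1) :=
            mul_le_mul (pow_le_pow_left₀ (by positivity) h1' _) h2'
              (by positivity) (by positivity)
  
  have hNp : (q-1)*p = N - p := by
    rw [hNdef]; exact (sub_helper p q (by omega) (by omega)).1
  have hNp1 : 1 ≤ N - p := by
    rw [hNdef]; exact (sub_helper p q (by omega) (by omega)).2
  have hNq : (p-1)*q = N - q := by
    rw [hNdef, mul_comm p q]; exact (sub_helper q p (by omega) (by omega)).1
  have hNq1 : 1 ≤ N - q := by
    rw [hNdef, mul_comm p q]; exact (sub_helper q p (by omega) (by omega)).2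
  have hkey : t ≤ K := by
    rcases max_cases 1 (max (‖x‖^q) (‖y‖^p)) with ⟨hmax, _⟩ | ⟨hmax, _⟩
    · rw [htdef, hmax]; exact hK1
    · rcases max_cases (‖x‖^q) (‖y‖^p) with ⟨hmax2, _⟩ | ⟨hmax2, _⟩
      · -- t = ‖x‖^q
        have hteq : t = ‖x‖^q := by rw [htdef, hmax, hmax2]
        obtain ⟨m, hm⟩ : ∃ m, N = m + 1 := ⟨N - 1, by omega⟩
        have hjensen := pow_sum_le_card_mul_sum_pow
          (s := (Finset.univ : Finset (idxSet p q)))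
          (f := fun i => ‖a i‖ * ((i:ℕ×ℕ).1:ℝ) * ‖x‖^((i:ℕ×ℕ).1-1) * ‖y‖^(i:ℕ×ℕ).2)
          (fun i _ => by positivity) m
        have hsum2 : ∑ i : idxSet p q,
            (‖a i‖ * ((i:ℕ×ℕ).1:ℝ) * ‖x‖^((i:ℕ×ℕ).1-1) * ‖y‖^(i:ℕ×ℕ).2) ^ N
            ≤ (n₀:ℝ) * (((q:ℝ)*A)^N * t^(N-p-1)) := by
          calc _ ≤ (Finset.univ : Finset (idxSet p q)).card • (((q:ℝ)*A)^N * t^(N-p-1)) :=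
                Finset.sum_le_card_nsmul _ _ _ (fun i _ => htermx i)
            _ = _ := by rw [nsmul_eq_mul, Finset.card_univ, Fintype.card_coe]
        have hSN : (∑ i : idxSet p q,
            ‖a i‖ * ((i:ℕ×ℕ).1:ℝ) * ‖x‖^((i:ℕ×ℕ).1-1) * ‖y‖^(i:ℕ×ℕ).2) ^ N
            ≤ c ^ N * (((q:ℝ)*A)^N * t^(N-p-1)) := by
          have hn₀c : (n₀:ℝ) ≤ c := by rw [hcdef]; linarith
          have hn₀0 : (0:ℝ) ≤ (n₀:ℝ) := Nat.cast_nonneg _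
          calc _ ≤ ((Finset.univ : Finset (idxSet p q)).card : ℝ)^m *
                (∑ i : idxSet p q,
                  (‖a i‖ * ((i:ℕ×ℕ).1:ℝ) * ‖x‖^((i:ℕ×ℕ).1-1) * ‖y‖^(i:ℕ×ℕ).2)^N) := by
                rw [hm]; exact hjensen
            _ ≤ (n₀:ℝ)^m * ((n₀:ℝ) * (((q:ℝ)*A)^N * t^(N-p-1))) := by
                rw [Finset.card_univ, Fintype.card_coe]
                exact mul_le_mul_of_nonneg_left hsum2 (pow_nonneg (Nat.cast_nonneg _) _)
            _ = (n₀:ℝ)^N * (((q:ℝ)*A)^N * t^(N-p-1)) := by rw [hm]; ring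
            _ ≤ c^N * (((q:ℝ)*A)^N * t^(N-p-1)) :=
                mul_le_mul_of_nonneg_right (pow_le_pow_left₀ hn₀0 hn₀c N) (by positivity)
        have hL : (q:ℝ)^N * t^(N-p) ≤ (∑ i : idxSet p q,
            ‖a i‖ * ((i:ℕ×ℕ).1:ℝ) * ‖x‖^((i:ℕ×ℕ).1-1) * ‖y‖^(i:ℕ×ℕ).2)^N := by
          have h0x : (0:ℝ) ≤ (q:ℝ) * ‖x‖^(q-1) := by positivity
          have hpw := pow_le_pow_left₀ h0x hxineq N
          calc (q:ℝ)^N * t^(N-p) = ((q:ℝ) * ‖x‖^(q-1))^N := by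
                rw [mul_pow, hteq, ← pow_mul, ← pow_mul]
                congr 1
                congr 1
                rw [← hNp, hNdef]
                ring
            _ ≤ _ := hpw
        have h1q : (1:ℝ) ≤ (q:ℝ)^N := one_le_pow₀ (by exact_mod_cast hq1)
        have h2 : t^(N-p) ≤ K * t^(N-p-1) := by
          calc t^(N-p) ≤ (q:ℝ)^N * t^(N-p) := le_mul_of_one_le_left (by positivity) h1q
            _ ≤ c^N * (((q:ℝ)*A)^N * t^(N-p-1)) := le_trans hL hSN
            _ = K * t^(N-p-1) := by
                rw [hKdef, show (c*((q:ℝ)*A))^N = c^N * ((q:ℝ)^N * A^N) by rw [mul_pow, mul_pow]]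
                ring
        have hsplit : t^(N-p) = t * t^(N-p-1) := by
          rw [← pow_succ']
          congr 1
          omega
        rw [hsplit] at h2
        exact le_of_mul_le_mul_right h2 (pow_pos ht0 _)
      · -- t = ‖y‖^p
        have hteq : t = ‖y‖^p := by rw [htdef, hmax, hmax2]
        obtain ⟨m, hm⟩ : ∃ m, N = m + 1 := ⟨N - 1, by omega⟩
        have hjensen := pow_sum_le_card_mul_sum_pow
          (s := (Finset.univ : Finset (idxSet p q)))
          (f := fun i => ‖a i‖ * ((i:ℕ×ℕ).2:ℝ) * ‖x‖^(i:ℕ×ℕ).1 * ‖y‖^((i:ℕ×ℕ).2-1))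
          (fun i _ => by positivity) m
        have hsum2 : ∑ i : idxSet p q,
            (‖a i‖ * ((i:ℕ×ℕ).2:ℝ) * ‖x‖^(i:ℕ×ℕ).1 * ‖y‖^((i:ℕ×ℕ).2-1)) ^ N
            ≤ (n₀:ℝ) * (((p:ℝ)*A)^N * t^(N-q-1)) := by
          calc _ ≤ (Finset.univ : Finset (idxSet p q)).card • (((p:ℝ)*A)^N * t^(N-q-1)) :=
                Finset.sum_le_card_nsmul _ _ _ (fun i _ => htermy i)
            _ = _ := by rw [nsmul_eq_mul, Finset.card_univ, Fintype.card_coe]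
        have hSN : (∑ i : idxSet p q,
            ‖a i‖ * ((i:ℕ×ℕ).2:ℝ) * ‖x‖^(i:ℕ×ℕ).1 * ‖y‖^((i:ℕ×ℕ).2-1)) ^ N
            ≤ c ^ N * (((p:ℝ)*A)^N * t^(N-q-1)) := by
          have hn₀c : (n₀:ℝ) ≤ c := by rw [hcdef]; linarith
          have hn₀0 : (0:ℝ) ≤ (n₀:ℝ) := Nat.cast_nonneg _
          calc _ ≤ ((Finset.univ : Finset (idxSet p q)).card : ℝ)^m *
                (∑ i : idxSet p q,
                  (‖a i‖ * ((i:ℕ×ℕ).2:ℝ) * ‖x‖^(i:ℕ×ℕ).1 * ‖y‖^((i:ℕ×ℕ).2-1))^N) := by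
                rw [hm]; exact hjensen
            _ ≤ (n₀:ℝ)^m * ((n₀:ℝ) * (((p:ℝ)*A)^N * t^(N-q-1))) := by
                rw [Finset.card_univ, Fintype.card_coe]
                exact mul_le_mul_of_nonneg_left hsum2 (pow_nonneg (Nat.cast_nonneg _) _)
            _ = (n₀:ℝ)^N * (((p:ℝ)*A)^N * t^(N-q-1)) := by rw [hm]; ring
            _ ≤ c^N * (((p:ℝ)*A)^N * t^(N-q-1)) :=
                mul_le_mul_of_nonneg_right (pow_le_pow_left₀ hn₀0 hn₀c N) (by positivity)
        have hL : (p:ℝ)^N * t^(N-q) ≤ (∑ i : idxSet p q,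
            ‖a i‖ * ((i:ℕ×ℕ).2:ℝ) * ‖x‖^(i:ℕ×ℕ).1 * ‖y‖^((i:ℕ×ℕ).2-1))^N := by
          have h0y : (0:ℝ) ≤ (p:ℝ) * ‖y‖^(p-1) := by positivity
          have hpw := pow_le_pow_left₀ h0y hyineq N
          calc (p:ℝ)^N * t^(N-q) = ((p:ℝ) * ‖y‖^(p-1))^N := by
                rw [mul_pow, hteq, ← pow_mul, ← pow_mul]
                congr 1
                congr 1
                rw [← hNq, hNdef]
                ring
            _ ≤ _ := hpw
        have h1p : (1:ℝ) ≤ (p:ℝ)^N := one_le_pow₀ (by exact_mod_cast hp1)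
        have h2 : t^(N-q) ≤ K * t^(N-q-1) := by
          have hcq : c*((p:ℝ)*A) ≤ c*((q:ℝ)*A) := by
            have hpqR : (p:ℝ) ≤ (q:ℝ) := by exact_mod_cast le_of_lt hpq
            have hnn : 0 ≤ c * A * ((q:ℝ) - p) :=
              mul_nonneg (mul_nonneg (by linarith) (by linarith)) (by linarith)
            nlinarith [hnn]
          calc t^(N-q) ≤ (p:ℝ)^N * t^(N-q) := le_mul_of_one_le_left (by positivity) h1p
            _ ≤ c^N * (((p:ℝ)*A)^N * t^(N-q-1)) := le_trans hL hSN
            _ = (c*((p:ℝ)*A))^N * t^(N-q-1) := by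
                rw [show (c*((p:ℝ)*A))^N = c^N * ((p:ℝ)^N * A^N) by rw [mul_pow, mul_pow]]
                ring
            _ ≤ K * t^(N-q-1) := by
                apply mul_le_mul_of_nonneg_right _ (by positivity)
                rw [hKdef]
                exact pow_le_pow_left₀ (mul_nonneg (by linarith) (mul_nonneg (Nat.cast_nonneg _) (by linarith))) hcq N
        have hsplit : t^(N-q) = t * t^(N-q-1) := by
          rw [← pow_succ']
          congr 1
          omega
        rw [hsplit] at h2
        exact le_of_mul_le_mul_right h2 (pow_pos ht0 _)
  constructor
  · rcases le_or_gt ‖x‖ 1 with h | h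
    · exact le_trans h hK1
    · exact le_trans (le_trans (le_self_pow₀ (le_of_lt h) (by omega)) hxt) hkey
  · rcases le_or_gt ‖y‖ 1 with h | h
    · exact le_trans h hK1
    · exact le_trans (le_trans (le_self_pow₀ (le_of_lt h) (by omega)) hyt) hkey

lemma coord_le {ι : Type*} [Fintype ι] (v : EuclideanSpace ℂ ι) (i : ι) : ‖v i‖ ≤ ‖v‖ := by
  rw [EuclideanSpace.norm_eq]
  have h1 : ‖v i‖^2 ≤ ∑ j, ‖v j‖^2 :=
    Finset.single_le_sum (fun j _ => sq_nonneg ‖v j‖) (Finset.mem_univ i)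
  have := Real.sqrt_le_sqrt h1
  rwa [Real.sqrt_sq (norm_nonneg _)] at this

lemma norm_le_two (v : EuclideanSpace ℂ (Fin 2)) : ‖v‖ ≤ ‖v 0‖ + ‖v 1‖ := by
  rw [EuclideanSpace.norm_eq, Fin.sum_univ_two]
  have h1 : ‖v 0‖^2 + ‖v 1‖^2 ≤ (‖v 0‖ + ‖v 1‖)^2 := by
    nlinarith [norm_nonneg (v 0), norm_nonneg (v 1)]
  have := Real.sqrt_le_sqrt h1
  rwa [Real.sqrt_sq (by positivity)] at this

lemma isClosed_incSet (p q : ℕ) : IsClosed (incSet p q) := by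
  have hx : Continuous fun s : (EuclideanSpace ℂ ↥(idxSet p q)) × EuclideanSpace ℂ (Fin 2) =>
      s.2 0 := (EuclideanSpace.proj (0 : Fin 2)).continuous.comp continuous_snd
  have hy : Continuous fun s : (EuclideanSpace ℂ ↥(idxSet p q)) × EuclideanSpace ℂ (Fin 2) =>
      s.2 1 := (EuclideanSpace.proj (1 : Fin 2)).continuous.comp continuous_snd
  have hcoef : ∀ i : idxSet p q, Continuous
      fun s : (EuclideanSpace ℂ ↥(idxSet p q)) × EuclideanSpace ℂ (Fin 2) => s.1 i :=
    fun i => (EuclideanSpace.proj i).continuous.comp continuous_fst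
  have hF : Continuous fun s : (EuclideanSpace ℂ ↥(idxSet p q)) × EuclideanSpace ℂ (Fin 2) =>
      eval ![s.2 0, s.2 1] (wPoly ℂ p q fun i => s.1 i) := by
    simp only [eval_wPoly]
    exact ((hy.pow p).sub (hx.pow q)).add
      (continuous_finset_sum _ fun i _ => (((hcoef i).mul (hx.pow _)).mul (hy.pow _)))
  have hG : Continuous fun s : (EuclideanSpace ℂ ↥(idxSet p q)) × EuclideanSpace ℂ (Fin 2) =>
      eval ![s.2 0, s.2 1] (pderiv 0 (wPoly ℂ p q fun i => s.1 i)) := by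
    simp only [eval_pderiv0_wPoly]
    exact (continuous_const.mul (hx.pow _)).add
      (continuous_finset_sum _ fun i _ =>
        (((hcoef i).mul continuous_const).mul (hx.pow _)).mul (hy.pow _))
  have hH : Continuous fun s : (EuclideanSpace ℂ ↥(idxSet p q)) × EuclideanSpace ℂ (Fin 2) =>
      eval ![s.2 0, s.2 1] (pderiv 1 (wPoly ℂ p q fun i => s.1 i)) := by
    simp only [eval_pderiv1_wPoly]
    exact (continuous_const.mul (hy.pow _)).add
      (continuous_finset_sum _ fun i _ =>
        (((hcoef i).mul continuous_const).mul (hx.pow _)).mul (hy.pow _))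
  have heq : incSet p q =
      {s : (EuclideanSpace ℂ ↥(idxSet p q)) × EuclideanSpace ℂ (Fin 2) |
        eval ![s.2 0, s.2 1] (wPoly ℂ p q fun i => s.1 i) = 0} ∩
      ({s | eval ![s.2 0, s.2 1] (pderiv 0 (wPoly ℂ p q fun i => s.1 i)) = 0} ∩
       {s | eval ![s.2 0, s.2 1] (pderiv 1 (wPoly ℂ p q fun i => s.1 i)) = 0}) := rfl
  rw [heq]
  exact (isClosed_eq hF continuous_const).inter
    ((isClosed_eq hG continuous_const).inter (isClosed_eq hH continuous_const))

end AuxLemmas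

section Main
open Metric Set

/-- **Lemma 3.4(i).** Let `C_α` be a nodal curve with exactly `l ≥ 1` nodes `P 0, …, P (l-1)`,
let `S` be the incidence set with its subspace topology and `π : S → ℂ^I` the projection.
For every `δ > 0` there are `ε > 0` and pairwise disjoint open sets `U i ∋ (α, P i)` of `S`
with `π⁻¹(U_ε(α)) = U 0 ∪ ⋯ ∪ U (l-1)` and `U i ⊆ U_ε(α) × U_δ(P i)`. -/
theorem local_structure_of_incidence_set_at_nodal_curve
    (p q : ℕ) (hp : 1 < p) (hpq : p < q) (hco : Nat.Coprime p q)
    (α : EuclideanSpace ℂ ↥(idxSet p q))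
    (l : ℕ) (hl : 1 ≤ l) (P : Fin l → EuclideanSpace ℂ (Fin 2))
    (hPinj : Function.Injective P)
    (hsing : ∀ R : ℂ × ℂ,
      IsSingAt ℂ (wPoly ℂ p q fun i => α i) R ↔ ∃ i, R = (P i 0, P i 1))
    (hnode : ∀ i, IsNodeAt ℂ (wPoly ℂ p q fun i => α i) (P i 0, P i 1))
    (δ : ℝ) (hδ : 0 < δ) :
    ∃ ε : ℝ, 0 < ε ∧
      ∃ U : Fin l → Set (incSet p q),
        Pairwise (Function.onFun Disjoint U) ∧
        (∀ i, IsOpen (U i)) ∧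
        (∀ i, (⟨(α, P i), (hnode i).1⟩ : incSet p q) ∈ U i) ∧
        ((fun s : incSet p q => s.1.1) ⁻¹' Metric.ball α ε = ⋃ i, U i) ∧
        (∀ i, U i ⊆ {s : incSet p q |
          dist s.1.1 α < ε ∧ dist s.1.2 (P i) < δ}) := by
  classical
  -- separation constant between nodes
  obtain ⟨c, hcpos, hcsep⟩ : ∃ c > 0, ∀ i j : Fin l, i ≠ j → c ≤ dist (P i) (P j) := by
    by_cases hE : ∀ i j : Fin l, i = j
    · exact ⟨1, one_pos, fun i j hij => absurd (hE i j) hij⟩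
    · push_neg at hE
      obtain ⟨i₀, j₀, hne⟩ := hE
      obtain ⟨⟨i₁, j₁⟩, hmem, hmin⟩ := Finset.exists_min_image
        (s := Finset.univ.filter fun ij : Fin l × Fin l => ij.1 ≠ ij.2)
        (fun ij => dist (P ij.1) (P ij.2)) ⟨(i₀, j₀), by simp [hne]⟩
      have hne1 : i₁ ≠ j₁ := by simpa using hmem
      refine ⟨dist (P i₁) (P j₁), dist_pos.mpr (fun h => hne1 (hPinj h)),
        fun i j hij => hmin (i, j) (by simp [hij])⟩
  set δ' : ℝ := min δ (c/2) with hδ'def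
  have hδ'pos : 0 < δ' := lt_min hδ (by linarith)
  have hδ'δ : δ' ≤ δ := min_le_left _ _
  have hδ'c : δ' ≤ c/2 := min_le_right _ _
  -- the key properness claim
  obtain ⟨ε, hεpos, hεkey⟩ : ∃ ε > 0, ∀ s : (EuclideanSpace ℂ ↥(idxSet p q)) ×
      EuclideanSpace ℂ (Fin 2), s ∈ incSet p q → dist s.1 α < ε →
      ∃ i, dist s.2 (P i) < δ' := by
    set A : ℝ := ‖α‖ + 1 with hAdef
    have hA1 : (1:ℝ) ≤ A := by have := norm_nonneg α; linarith
    set M : ℝ := (((idxSet p q).card + 1 : ℝ) * (q * A)) ^ (p * q) with hMdef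
    set T : Set ((EuclideanSpace ℂ ↥(idxSet p q)) × EuclideanSpace ℂ (Fin 2)) :=
      incSet p q ∩ ({s | dist s.1 α ≤ 1} ∩ {s | ∀ i, δ' ≤ dist s.2 (P i)}) with hTdef
    have hTclosed : IsClosed T := by
      apply (isClosed_incSet p q).inter
      apply IsClosed.inter
      · exact isClosed_le (Continuous.dist continuous_fst continuous_const) continuous_const
      · have : {s : (EuclideanSpace ℂ ↥(idxSet p q)) × EuclideanSpace ℂ (Fin 2) |
            ∀ i, δ' ≤ dist s.2 (P i)} = ⋂ i, {s | δ' ≤ dist s.2 (P i)} := by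
          ext s; simp
        rw [this]
        exact isClosed_iInter fun i => isClosed_le continuous_const
          (Continuous.dist continuous_snd continuous_const)
    have hTbdd : Bornology.IsBounded T := by
      apply Bornology.IsBounded.subset
        ((Metric.isBounded_closedBall (x := α) (r := 1)).prod
          (Metric.isBounded_closedBall (x := (0 : EuclideanSpace ℂ (Fin 2))) (r := 2*M)))
      rintro s ⟨hsinc, hs1, -⟩
      constructor
      · exact Metric.mem_closedBall.mpr hs1
      · rw [Metric.mem_closedBall, dist_zero_right]
        have ha : ∀ i : idxSet p q, ‖s.1 i‖ ≤ A := by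
          intro i
          have h1 : ‖s.1 i‖ ≤ ‖s.1‖ := coord_le _ _
          have h2 : ‖s.1‖ - ‖α‖ ≤ ‖s.1 - α‖ := norm_sub_norm_le _ _
          have h3 : ‖s.1 - α‖ = dist s.1 α := (dist_eq_norm _ _).symm
          have hs1' : dist s.1 α ≤ 1 := hs1
          rw [hAdef]; linarith
        obtain ⟨hbx, hby⟩ := critBound p q hp hpq A hA1 (fun i => s.1 i) ha
          (s.2 0) (s.2 1) hsinc.2.1 hsinc.2.2
        have := norm_le_two s.2
        have hM1 : (0:ℝ) ≤ M := by
          rw [hMdef]; positivity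
        linarith
    have hTcomp : IsCompact T := Metric.isCompact_of_isClosed_isBounded hTclosed hTbdd
    have hπT : IsCompact (Prod.fst '' T) := hTcomp.image continuous_fst
    have hαnot : α ∉ Prod.fst '' T := by
      rintro ⟨s, ⟨hsinc, -, hfar⟩, hfst⟩
      have hsing' : IsSingAt ℂ (wPoly ℂ p q fun i => α i) (s.2 0, s.2 1) := by
        rw [← hfst]; exact hsinc
      obtain ⟨i, hi⟩ := (hsing _).mp hsing'
      have hs2 : s.2 = P i := by
        ext j
        fin_cases j
        · exact congrArg Prod.fst hi
        · exact congrArg Prod.snd hi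
      have := hfar i
      rw [hs2, dist_self] at this
      linarith
    obtain ⟨ε', hε'pos, hball⟩ : ∃ ε' > 0, Metric.ball α ε' ⊆ (Prod.fst '' T)ᶜ := by
      have : IsOpen (Prod.fst '' T)ᶜ := hπT.isClosed.isOpen_compl
      exact Metric.isOpen_iff.mp this α hαnot
    refine ⟨min ε' 1, lt_min hε'pos one_pos, ?_⟩
    intro s hs hd
    by_contra hcon
    push_neg at hcon
    have hsT : s ∈ T := ⟨hs, le_of_lt (lt_of_lt_of_le hd (min_le_right _ _)), hcon⟩
    exact hball (Metric.mem_ball.mpr (lt_of_lt_of_le hd (min_le_left _ _))) ⟨s, hsT, rfl⟩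
  -- assemble the open sets
  refine ⟨ε, hεpos, fun i => (fun s : incSet p q => s.1) ⁻¹'
    (Metric.ball α ε ×ˢ Metric.ball (P i) δ'), ?_, ?_, ?_, ?_, ?_⟩
  · intro i j hij
    rw [Function.onFun, Set.disjoint_left]
    rintro s ⟨-, hi⟩ ⟨-, hj⟩
    have h1 : dist (s : _).1.2 (P i) < δ' := Metric.mem_ball.mp hi
    have h2 : dist (s : _).1.2 (P j) < δ' := Metric.mem_ball.mp hj
    have h3 : c ≤ dist (P i) (P j) := hcsep i j hij
    have h4 : dist (P i) (P j) ≤ dist (P i) s.1.2 + dist s.1.2 (P j) := dist_triangle _ _ _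
    have h5 : dist (P i) s.1.2 = dist s.1.2 (P i) := dist_comm _ _
    linarith
  · exact fun i => (isOpen_ball.prod isOpen_ball).preimage continuous_subtype_val
  · intro i
    constructor
    · rw [Metric.mem_ball, dist_self]; exact hεpos
    · rw [Metric.mem_ball, dist_self]; exact hδ'pos
  · ext s
    simp only [Set.mem_preimage, Set.mem_iUnion, Set.mem_prod, Metric.mem_ball]
    constructor
    · intro hd
      obtain ⟨i, hi⟩ := hεkey s.1 s.2 hd
      exact ⟨i, hd, hi⟩
    · rintro ⟨i, hd, -⟩
      exact hd
  · intro i s hs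
    obtain ⟨h1, h2⟩ := hs
    rw [Metric.mem_ball] at h1 h2
    exact ⟨h1, lt_of_lt_of_le h2 hδ'δ⟩

end Main
end

section
/- Let α ∈ K^I and suppose C_α is a nodal curve. Then: (a) for every node (x₀,y₀) of C_α, the localization of the K-algebra K[X,Y]/(F_α, (F_α)_X, (F_α)_Y) at the maximal ideal generated by the images of X − x₀ and Y − y₀ is a one-dimensional K-vector space; (b) the dimension of K[X,Y]/(F_α, (F_α)_X, (F_α)_Y) as a K-vector space equals the number of nodes of C_α. -/
open MvPolynomial

set_option synthInstance.maxHeartbeats 1000000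
set_option maxHeartbeats 1000000

/-- The affine coordinate ring of the singular locus, `K[X,Y]/(F_a, (F_a)_X, (F_a)_Y)`. -/
abbrev curveSingAlg (K : Type) [Field K] (p q : ℕ) (a : idxSet p q → K) :=
  MvPolynomial (Fin 2) K ⧸
    (Ideal.span {wPoly K p q a, pderiv 0 (wPoly K p q a), pderiv 1 (wPoly K p q a)})

/-- The ideal of `K[X,Y]/(F_a, (F_a)_X, (F_a)_Y)` generated by the images of
`X − x₀` and `Y − y₀`. -/
noncomputable def ptIdeal (K : Type) [Field K] (p q : ℕ) (a : idxSet p q → K) (x0 y0 : K) :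
    Ideal (curveSingAlg K p q a) :=
  Ideal.span {Ideal.Quotient.mk _ (X 0 - C x0), Ideal.Quotient.mk _ (X 1 - C y0)}

lemma my_pderiv_comm {σ : Type*} [DecidableEq σ] {R : Type*} [CommSemiring R] (i j : σ)
    (f : MvPolynomial σ R) : pderiv i (pderiv j f) = pderiv j (pderiv i f) := by
  induction f using MvPolynomial.induction_on with
  | C a => simp
  | add f g hf hg => simp [hf, hg]
  | mul_X f k hf =>
    rcases eq_or_ne k j with rfl | hkj <;> rcases eq_or_ne k i with rfl | hki <;>
      simp [pderiv_mul, pderiv_X_self, pderiv_X_of_ne, hf, *] <;> ring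


section
variable {K : Type} [Field K]
set_option linter.unusedSectionVars false

/-- the maximal ideal of a point -/
noncomputable def mIdl (P : K × K) : Ideal (MvPolynomial (Fin 2) K) :=
  Ideal.span {X 0 - C P.1, X 1 - C P.2}

lemma sub_C_mem_mIdl (P : K × K) (f : MvPolynomial (Fin 2) K) :
    f - C (eval ![P.1, P.2] f) ∈ mIdl P := by
  induction f using MvPolynomial.induction_on with
  | C a => simp
  | add f g hf hg =>
    have : f + g - C (eval ![P.1, P.2] (f + g)) =
        (f - C (eval ![P.1, P.2] f)) + (g - C (eval ![P.1, P.2] g)) := by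
      rw [eval_add, C_add]; ring
    rw [this]; exact add_mem hf hg
  | mul_X f k hf =>
    have : f * X k - C (eval ![P.1, P.2] (f * X k)) =
        (f - C (eval ![P.1, P.2] f)) * X k
          + C (eval ![P.1, P.2] f) * (X k - C (![P.1, P.2] k)) := by
      rw [eval_mul, eval_X, C_mul]; ring
    rw [this]
    refine add_mem (Ideal.mul_mem_right _ _ hf) (Ideal.mul_mem_left _ _ ?_)
    fin_cases k
    · exact Ideal.subset_span (by simp [Set.mem_insert_iff])
    · exact Ideal.subset_span (by simp [Set.mem_insert_iff])

lemma mem_mIdl_iff {P : K × K} {f : MvPolynomial (Fin 2) K} :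
    f ∈ mIdl P ↔ eval ![P.1, P.2] f = 0 := by
  constructor
  · intro hf
    refine Submodule.span_induction ?_ ?_ ?_ ?_ hf
    · rintro g (rfl | rfl) <;> simp_all
    · simp
    · intro g h _ _ hg hh; simp [hg, hh]
    · intro c g _ hg; simp [hg]
  · intro h
    have := sub_C_mem_mIdl P f
    rwa [h, map_zero, sub_zero] at this

lemma mIdl_eq_vanishingIdeal (P : K × K) : mIdl P = vanishingIdeal K {![P.1, P.2]} := by
  ext f
  rw [mem_mIdl_iff, mem_vanishingIdeal_singleton_iff]
  exact Iff.rfl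

lemma mem_sq_of_derivs {P : K × K} {h : MvPolynomial (Fin 2) K}
    (h0 : eval ![P.1, P.2] h = 0)
    (h1 : eval ![P.1, P.2] (pderiv 0 h) = 0)
    (h2 : eval ![P.1, P.2] (pderiv 1 h) = 0) :
    h ∈ mIdl P * mIdl P := by
  set α : MvPolynomial (Fin 2) K := X 0 - C P.1 with hα
  set β : MvPolynomial (Fin 2) K := X 1 - C P.2 with hβ
  have hαm : α ∈ mIdl P := Ideal.subset_span (by simp [Set.mem_insert_iff, hα])
  have hβm : β ∈ mIdl P := Ideal.subset_span (by simp [Set.mem_insert_iff, hβ])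
  obtain ⟨u, v, huv⟩ := Ideal.mem_span_pair.mp (mem_mIdl_iff.mpr h0)
  have hd0 : pderiv 0 h = pderiv 0 u * α + u + pderiv 0 v * β := by
    rw [← huv]; simp only [map_add, pderiv_mul, hα, hβ, map_sub, pderiv_X_self, pderiv_C,
      pderiv_X_of_ne (show (1:Fin 2) ≠ 0 by decide), pderiv_X_of_ne (show (0:Fin 2) ≠ 1 by decide)]
    ring
  have hd1 : pderiv 1 h = pderiv 1 u * α + pderiv 1 v * β + v := by
    rw [← huv]; simp only [map_add, pderiv_mul, hα, hβ, map_sub, pderiv_X_self, pderiv_C,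
      pderiv_X_of_ne (show (1:Fin 2) ≠ 0 by decide), pderiv_X_of_ne (show (0:Fin 2) ≠ 1 by decide)]
    ring
  have eα : eval ![P.1, P.2] α = 0 := by simp [hα]
  have eβ : eval ![P.1, P.2] β = 0 := by simp [hβ]
  have hu : u ∈ mIdl P := by
    rw [mem_mIdl_iff]
    have := h1; rw [hd0] at this; simpa [eα, eβ] using this
  have hv : v ∈ mIdl P := by
    rw [mem_mIdl_iff]
    have := h2; rw [hd1] at this; simpa [eα, eβ] using this
  rw [← huv]
  exact add_mem (Ideal.mul_mem_mul hu hαm) (Ideal.mul_mem_mul hv hβm)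
lemma node_exists_s {G : MvPolynomial (Fin 2) K} {P : K × K} (hn : IsNodeAt K G P) :
    ∃ s : MvPolynomial (Fin 2) K, eval ![P.1, P.2] s ≠ 0 ∧
      ∀ f ∈ mIdl P, s * f ∈ Ideal.span {G, pderiv 0 G, pderiv 1 G} := by
  obtain ⟨⟨hG, hGX, hGY⟩, hH⟩ := hn
  have hΔ : ((eval ![P.1, P.2] (pderiv 0 (pderiv 0 G))) * (eval ![P.1, P.2] (pderiv 1 (pderiv 1 G))) - (eval ![P.1, P.2] (pderiv 0 (pderiv 1 G))) ^ 2) ≠ 0 := by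
    simpa [hessPoly] using hH
  set α : MvPolynomial (Fin 2) K := X 0 - C P.1 with hα
  set β : MvPolynomial (Fin 2) K := X 1 - C P.2 with hβ
  have hαm : α ∈ mIdl P := Ideal.subset_span (by simp [Set.mem_insert_iff, hα])
  have hβm : β ∈ mIdl P := Ideal.subset_span (by simp [Set.mem_insert_iff, hβ])
  have eα : eval ![P.1, P.2] α = 0 := by simp [hα]
  have eβ : eval ![P.1, P.2] β = 0 := by simp [hβ]
  have pdα0 : pderiv 0 α = 1 := by simp [hα, pderiv_X_self]
  have pdα1 : pderiv 1 α = 0 := by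
    simp [hα, pderiv_X_of_ne (show (0:Fin 2) ≠ 1 by decide)]
  have pdβ0 : pderiv 0 β = 0 := by
    simp [hβ, pderiv_X_of_ne (show (1:Fin 2) ≠ 0 by decide)]
  have pdβ1 : pderiv 1 β = 1 := by simp [hβ, pderiv_X_self]
  have hα' : α - (C ((eval ![P.1, P.2] (pderiv 1 (pderiv 1 G))) / ((eval ![P.1, P.2] (pderiv 0 (pderiv 0 G))) * (eval ![P.1, P.2] (pderiv 1 (pderiv 1 G))) - (eval ![P.1, P.2] (pderiv 0 (pderiv 1 G))) ^ 2)) * pderiv 0 G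
      + C (-(eval ![P.1, P.2] (pderiv 0 (pderiv 1 G))) / ((eval ![P.1, P.2] (pderiv 0 (pderiv 0 G))) * (eval ![P.1, P.2] (pderiv 1 (pderiv 1 G))) - (eval ![P.1, P.2] (pderiv 0 (pderiv 1 G))) ^ 2)) * pderiv 1 G) ∈ mIdl P * mIdl P := by
    apply mem_sq_of_derivs (P := P)
    · simp only [map_sub, map_add, map_mul, eval_C, eα, hGX, hGY]; ring
    · simp only [map_sub, map_add, pderiv_C_mul, map_mul, eval_C, pdα0, map_one]
      rw [div_mul_eq_mul_div, div_mul_eq_mul_div, ← add_div, sub_eq_zero, eq_comm,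
        div_eq_one_iff_eq hΔ]
      ring
    · simp only [map_sub, map_add, pderiv_C_mul, map_mul, eval_C, pdα1, map_zero,
        my_pderiv_comm (1:Fin 2) 0 G]
      field_simp
      ring
  have hβ' : β - (C (-(eval ![P.1, P.2] (pderiv 0 (pderiv 1 G))) / ((eval ![P.1, P.2] (pderiv 0 (pderiv 0 G))) * (eval ![P.1, P.2] (pderiv 1 (pderiv 1 G))) - (eval ![P.1, P.2] (pderiv 0 (pderiv 1 G))) ^ 2)) * pderiv 0 G
      + C ((eval ![P.1, P.2] (pderiv 0 (pderiv 0 G))) / ((eval ![P.1, P.2] (pderiv 0 (pderiv 0 G))) * (eval ![P.1, P.2] (pderiv 1 (pderiv 1 G))) - (eval ![P.1, P.2] (pderiv 0 (pderiv 1 G))) ^ 2)) * pderiv 1 G) ∈ mIdl P * mIdl P := by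
    apply mem_sq_of_derivs (P := P)
    · simp only [map_sub, map_add, map_mul, eval_C, eβ, hGX, hGY]; ring
    · simp only [map_sub, map_add, pderiv_C_mul, map_mul, eval_C, pdβ0, map_zero,
        my_pderiv_comm (1:Fin 2) 0 G]
      field_simp
      ring
    · simp only [map_sub, map_add, pderiv_C_mul, map_mul, eval_C, pdβ1, map_one,
        my_pderiv_comm (1:Fin 2) 0 G]
      field_simp
      ring
  have hmm : ∀ h ∈ mIdl P * mIdl P, ∃ u ∈ mIdl P, ∃ v ∈ mIdl P, h = α * u + β * v := by
    intro h hh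
    have hsplit : mIdl P * mIdl P = Ideal.span {α} * mIdl P ⊔ Ideal.span {β} * mIdl P := by
      rw [show mIdl P = Ideal.span {α, β} from rfl, Ideal.span_insert, Ideal.sup_mul]
    rw [hsplit] at hh
    obtain ⟨h1, hh1, h2, hh2, rfl⟩ := Submodule.mem_sup.mp hh
    obtain ⟨u, hu, hu'⟩ := Ideal.mem_span_singleton_mul.mp hh1
    obtain ⟨v, hv, hv'⟩ := Ideal.mem_span_singleton_mul.mp hh2
    exact ⟨u, hu, v, hv, by rw [← hu', ← hv']⟩
  obtain ⟨u₁, hu₁, v₁, hv₁, e₁⟩ := hmm _ hα'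
  obtain ⟨u₂, hu₂, v₂, hv₂, e₂⟩ := hmm _ hβ'
  set JJ := Ideal.span {G, pderiv 0 G, pderiv 1 G} with hJJ
  have hGXJ : pderiv 0 G ∈ JJ := Ideal.subset_span (by simp [Set.mem_insert_iff])
  have hGYJ : pderiv 1 G ∈ JJ := Ideal.subset_span (by simp [Set.mem_insert_iff])
  have hj₁ : α - α * u₁ - β * v₁ ∈ JJ := by
    rw [show α - α * u₁ - β * v₁ = C ((eval ![P.1, P.2] (pderiv 1 (pderiv 1 G))) / ((eval ![P.1, P.2] (pderiv 0 (pderiv 0 G))) * (eval ![P.1, P.2] (pderiv 1 (pderiv 1 G))) - (eval ![P.1, P.2] (pderiv 0 (pderiv 1 G))) ^ 2)) * pderiv 0 G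
      + C (-(eval ![P.1, P.2] (pderiv 0 (pderiv 1 G))) / ((eval ![P.1, P.2] (pderiv 0 (pderiv 0 G))) * (eval ![P.1, P.2] (pderiv 1 (pderiv 1 G))) - (eval ![P.1, P.2] (pderiv 0 (pderiv 1 G))) ^ 2)) * pderiv 1 G by linear_combination e₁]
    exact add_mem (Ideal.mul_mem_left _ _ hGXJ) (Ideal.mul_mem_left _ _ hGYJ)
  have hj₂ : β - α * u₂ - β * v₂ ∈ JJ := by
    rw [show β - α * u₂ - β * v₂ = C (-(eval ![P.1, P.2] (pderiv 0 (pderiv 1 G))) / ((eval ![P.1, P.2] (pderiv 0 (pderiv 0 G))) * (eval ![P.1, P.2] (pderiv 1 (pderiv 1 G))) - (eval ![P.1, P.2] (pderiv 0 (pderiv 1 G))) ^ 2)) * pderiv 0 G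
      + C ((eval ![P.1, P.2] (pderiv 0 (pderiv 0 G))) / ((eval ![P.1, P.2] (pderiv 0 (pderiv 0 G))) * (eval ![P.1, P.2] (pderiv 1 (pderiv 1 G))) - (eval ![P.1, P.2] (pderiv 0 (pderiv 1 G))) ^ 2)) * pderiv 1 G by linear_combination e₂]
    exact add_mem (Ideal.mul_mem_left _ _ hGXJ) (Ideal.mul_mem_left _ _ hGYJ)
  refine ⟨(1 - u₁) * (1 - v₂) - v₁ * u₂, ?_, ?_⟩
  · have h1 : eval ![P.1, P.2] ((1 - u₁) * (1 - v₂) - v₁ * u₂) = 1 := by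
      simp [mem_mIdl_iff.mp hu₁, mem_mIdl_iff.mp hv₁, mem_mIdl_iff.mp hu₂, mem_mIdl_iff.mp hv₂]
    rw [h1]; exact one_ne_zero
  · intro f hf
    obtain ⟨w₁, w₂, hw⟩ := Ideal.mem_span_pair.mp hf
    have hmα : ((1 - u₁) * (1 - v₂) - v₁ * u₂) * α ∈ JJ := by
      rw [show ((1 - u₁) * (1 - v₂) - v₁ * u₂) * α
        = (1 - v₂) * (α - α * u₁ - β * v₁) + v₁ * (β - α * u₂ - β * v₂) by ring]
      exact add_mem (Ideal.mul_mem_left _ _ hj₁) (Ideal.mul_mem_left _ _ hj₂)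
    have hmβ : ((1 - u₁) * (1 - v₂) - v₁ * u₂) * β ∈ JJ := by
      rw [show ((1 - u₁) * (1 - v₂) - v₁ * u₂) * β
        = u₂ * (α - α * u₁ - β * v₁) + (1 - u₁) * (β - α * u₂ - β * v₂) by ring]
      exact add_mem (Ideal.mul_mem_left _ _ hj₁) (Ideal.mul_mem_left _ _ hj₂)
    rw [show ((1 - u₁) * (1 - v₂) - v₁ * u₂) * f
      = w₁ * (((1 - u₁) * (1 - v₂) - v₁ * u₂) * α) + w₂ * (((1 - u₁) * (1 - v₂) - v₁ * u₂) * β) by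
        rw [← hw]; ring]
    exact add_mem (Ideal.mul_mem_left _ _ hmα) (Ideal.mul_mem_left _ _ hmβ)

lemma Jspan_le_mIdl {G : MvPolynomial (Fin 2) K} {P : K × K} (hsing : IsSingAt K G P) :
    Ideal.span {G, pderiv 0 G, pderiv 1 G} ≤ mIdl P := by
  rw [Ideal.span_le]
  rintro f (rfl | rfl | rfl) <;> rw [SetLike.mem_coe, mem_mIdl_iff]
  exacts [hsing.1, hsing.2.1, hsing.2.2]

lemma vec_eq (x : Fin 2 → K) : ![x 0, x 1] = x := by
  funext i; fin_cases i <;> simp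

lemma key3 [IsAlgClosed K] {G : MvPolynomial (Fin 2) K}
    (hnodal : ∀ Q : K × K, IsSingAt K G Q → IsNodeAt K G Q)
    (g : MvPolynomial (Fin 2) K ⧸ Ideal.span {G, pderiv 0 G, pderiv 1 G})
    (hg : ∀ P : K × K, IsSingAt K G P →
      g ∈ (mIdl P).map (Ideal.Quotient.mk (Ideal.span {G, pderiv 0 G, pderiv 1 G}))) :
    g = 0 := by
  by_contra hg0
  set T : Ideal (MvPolynomial (Fin 2) K ⧸ (Ideal.span {G, pderiv 0 G, pderiv 1 G})) := Submodule.colon ⊥ (SetLike.coe (Ideal.span {g})) with hT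
  have hTne : T ≠ ⊤ := by
    intro h
    have h1 : (1 : MvPolynomial (Fin 2) K ⧸ (Ideal.span {G, pderiv 0 G, pderiv 1 G})) ∈ T := h ▸ Submodule.mem_top
    have := Submodule.mem_colon.mp h1 g (Ideal.subset_span rfl)
    rw [one_smul, Submodule.mem_bot] at this
    exact hg0 this
  obtain ⟨M, hM, hTM⟩ := Ideal.exists_le_maximal T hTne
  haveI := hM
  have hM' : (M.comap (Ideal.Quotient.mk (Ideal.span {G, pderiv 0 G, pderiv 1 G}))).IsMaximal :=
    Ideal.comap_isMaximal_of_surjective _ Ideal.Quotient.mk_surjective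
  obtain ⟨x, hx⟩ := isMaximal_iff_eq_vanishingIdeal_singleton.mp hM'
  set P : K × K := (x 0, x 1) with hP
  have hxP : ![P.1, P.2] = x := vec_eq x
  have hJM : ∀ f ∈ Ideal.span {G, pderiv 0 G, pderiv 1 G}, eval x f = 0 := by
    intro f hf
    have : f ∈ M.comap (Ideal.Quotient.mk (Ideal.span {G, pderiv 0 G, pderiv 1 G})) := by
      simp only [Ideal.mem_comap]
      rw [Ideal.Quotient.eq_zero_iff_mem.mpr hf]
      exact M.zero_mem
    rw [hx] at this
    exact (mem_vanishingIdeal_singleton_iff x f).mp this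
  have hsing : IsSingAt K G P := by
    refine ⟨?_, ?_, ?_⟩ <;> rw [hxP] <;> apply hJM <;>
      exact Ideal.subset_span (by simp [Set.mem_insert_iff])
  obtain ⟨s, hs0, hs⟩ := node_exists_s (hnodal P hsing)
  obtain ⟨h, hh, hhg⟩ := (Ideal.mem_map_iff_of_surjective _ Ideal.Quotient.mk_surjective).mp
    (hg P hsing)
  have hsT : Ideal.Quotient.mk (Ideal.span {G, pderiv 0 G, pderiv 1 G}) s ∈ T := by
    rw [hT]
    refine Submodule.mem_colon.mpr ?_
    intro p hp
    obtain ⟨c, rfl⟩ := Ideal.mem_span_singleton'.mp hp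
    have hzero : Ideal.Quotient.mk (Ideal.span {G, pderiv 0 G, pderiv 1 G}) s * g = 0 := by
      rw [← hhg, ← map_mul, Ideal.Quotient.eq_zero_iff_mem]
      exact hs h hh
    rw [Submodule.mem_bot, smul_eq_mul]
    rw [show Ideal.Quotient.mk (Ideal.span {G, pderiv 0 G, pderiv 1 G}) s * (c * g) = c * (Ideal.Quotient.mk (Ideal.span {G, pderiv 0 G, pderiv 1 G}) s * g) by ring, hzero,
      mul_zero]
  have : s ∈ M.comap (Ideal.Quotient.mk (Ideal.span {G, pderiv 0 G, pderiv 1 G})) := hTM hsT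
  rw [hx] at this
  have := (mem_vanishingIdeal_singleton_iff x s).mp this
  rw [hxP] at hs0
  exact hs0 this
/-- evaluation at a singular point, descended to the quotient -/
noncomputable def kap (G : MvPolynomial (Fin 2) K) {P : K × K} (hP : IsSingAt K G P) :
    (MvPolynomial (Fin 2) K ⧸ Ideal.span {G, pderiv 0 G, pderiv 1 G}) →ₐ[K] K :=
  Ideal.Quotient.liftₐ _ (aeval ![P.1, P.2])
    (fun f hf => by
      rw [show (aeval (R := K) ![P.1, P.2]) f = eval ![P.1, P.2] f from
        RingHom.congr_fun (MvPolynomial.coe_aeval_eq_eval ![P.1, P.2]) f]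
      exact mem_mIdl_iff.mp (Jspan_le_mIdl hP hf))

lemma kap_mk (G : MvPolynomial (Fin 2) K) {P : K × K} (hP : IsSingAt K G P)
    (f : MvPolynomial (Fin 2) K) :
    kap G hP (Ideal.Quotient.mk _ f) = eval ![P.1, P.2] f := by
  show kap G hP (Ideal.Quotient.mkₐ K _ f) = _
  rw [kap, Ideal.Quotient.liftₐ_apply, Ideal.Quotient.mkₐ_eq_mk]
  exact RingHom.congr_fun (MvPolynomial.coe_aeval_eq_eval ![P.1, P.2]) f

lemma kap_zero_iff (G : MvPolynomial (Fin 2) K) {P : K × K} (hP : IsSingAt K G P)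
    (b : MvPolynomial (Fin 2) K ⧸ Ideal.span {G, pderiv 0 G, pderiv 1 G}) :
    kap G hP b = 0 ↔ b ∈ (mIdl P).map (Ideal.Quotient.mk _) := by
  obtain ⟨f, rfl⟩ := Ideal.Quotient.mk_surjective b
  rw [kap_mk G hP f]
  constructor
  · intro h
    exact Ideal.mem_map_of_mem _ (mem_mIdl_iff.mpr h)
  · intro h
    obtain ⟨g, hg, hgf⟩ := (Ideal.mem_map_iff_of_surjective _ Ideal.Quotient.mk_surjective).mp h
    have hd : g - f ∈ Ideal.span {G, pderiv 0 G, pderiv 1 G} := Ideal.Quotient.eq.mp hgf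
    have : f ∈ mIdl P := by
      have h2 : f = g - (g - f) := by ring
      rw [h2]; exact sub_mem hg (Jspan_le_mIdl hP hd)
    exact mem_mIdl_iff.mp this

lemma kap_surj (G : MvPolynomial (Fin 2) K) {P : K × K} (hP : IsSingAt K G P) :
    Function.Surjective (kap G hP) := fun c =>
  ⟨Ideal.Quotient.mk _ (C c), by rw [kap_mk G hP]; simp⟩

lemma famP_eq_ker (G : MvPolynomial (Fin 2) K) {P : K × K} (hP : IsSingAt K G P) :
    (mIdl P).map (Ideal.Quotient.mk (Ideal.span {G, pderiv 0 G, pderiv 1 G})) =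
      RingHom.ker (kap G hP) := by
  ext b
  rw [RingHom.mem_ker]
  exact (kap_zero_iff G hP b).symm

lemma famP_isMaximal (G : MvPolynomial (Fin 2) K) {P : K × K} (hP : IsSingAt K G P) :
    ((mIdl P).map (Ideal.Quotient.mk (Ideal.span {G, pderiv 0 G, pderiv 1 G}))).IsMaximal := by
  rw [famP_eq_ker G hP]
  exact RingHom.ker_isMaximal_of_surjective _ (kap_surj G hP)

lemma famP_inj (G : MvPolynomial (Fin 2) K) {P Q : K × K}
    (hP : IsSingAt K G P) (hQ : IsSingAt K G Q)
    (h : (mIdl P).map (Ideal.Quotient.mk (Ideal.span {G, pderiv 0 G, pderiv 1 G})) =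
      (mIdl Q).map (Ideal.Quotient.mk (Ideal.span {G, pderiv 0 G, pderiv 1 G}))) : P = Q := by
  have h1 : ∀ f ∈ mIdl P, eval ![Q.1, Q.2] f = 0 := by
    intro f hf
    have : Ideal.Quotient.mk _ f ∈ (mIdl Q).map
        (Ideal.Quotient.mk (Ideal.span {G, pderiv 0 G, pderiv 1 G})) :=
      h ▸ Ideal.mem_map_of_mem _ hf
    have := (kap_zero_iff G hQ _).mpr this
    rwa [kap_mk G hQ] at this
  have e1 := h1 (X 0 - C P.1) (Ideal.subset_span (by simp [Set.mem_insert_iff]))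
  have e2 := h1 (X 1 - C P.2) (Ideal.subset_span (by simp [Set.mem_insert_iff]))
  simp only [map_sub, eval_X, eval_C] at e1 e2
  have : Q.1 = P.1 := by simpa [sub_eq_zero] using e1
  have h2 : Q.2 = P.2 := by simpa [sub_eq_zero] using e2
  exact Prod.ext this.symm h2.symm

/-- The combined evaluation map onto `t → K` for a finite set of singular points. -/
lemma exists_Phi [IsAlgClosed K] (G : MvPolynomial (Fin 2) K) (t : Finset (K × K))
    (ht : ∀ P ∈ t, IsSingAt K G P) :
    ∃ Φ : (MvPolynomial (Fin 2) K ⧸ Ideal.span {G, pderiv 0 G, pderiv 1 G}) →ₐ[K]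
        ((P : ↥t) → K),
      Function.Surjective Φ ∧
      ∀ b, Φ b = 0 ↔ ∀ P (h : P ∈ t),
        b ∈ (mIdl P).map (Ideal.Quotient.mk (Ideal.span {G, pderiv 0 G, pderiv 1 G})) := by
  classical
  set fam : ↥t → Ideal (MvPolynomial (Fin 2) K ⧸ Ideal.span {G, pderiv 0 G, pderiv 1 G}) :=
    fun P => (mIdl (P : K × K)).map (Ideal.Quotient.mk _) with hfam
  have hmax : ∀ P : ↥t, (fam P).IsMaximal := fun P => famP_isMaximal G (ht P P.2)
  have hpair : Pairwise (Function.onFun IsCoprime fam) := by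
    intro P Q hne
    rw [Function.onFun, Ideal.isCoprime_iff_sup_eq]
    refine Ideal.IsMaximal.coprime_of_ne (hmax P) (hmax Q) ?_
    intro heq
    exact hne (Subtype.ext (famP_inj G (ht P P.2) (ht Q Q.2) heq))
  have hsurjCRT := Ideal.quotientInfToPiQuotient_surj hpair
  refine ⟨Pi.algHom _ _ (fun P => kap G (ht P P.2)), ?_, ?_⟩
  · intro g
    obtain ⟨x0, hx0⟩ := hsurjCRT (fun P => Ideal.Quotient.mk (fam P) (algebraMap K _ (g P)))
    obtain ⟨x, rfl⟩ := Ideal.Quotient.mk_surjective x0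
    refine ⟨x, ?_⟩
    funext P
    have hcomp := congrFun hx0 P
    rw [Ideal.quotientInfToPiQuotient_mk'] at hcomp
    have hdiff : x - algebraMap K _ (g P) ∈ fam P := by
      rw [← Ideal.Quotient.eq_zero_iff_mem, map_sub, sub_eq_zero]
      exact hcomp
    have h0 : kap G (ht P P.2) (x - algebraMap K _ (g P)) = 0 :=
      (kap_zero_iff G (ht P P.2) _).mpr hdiff
    rw [map_sub, AlgHom.commutes, sub_eq_zero] at h0
    simpa using h0
  · intro b
    constructor
    · intro hb P hP
      have := congrFun hb ⟨P, hP⟩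
      exact (kap_zero_iff G (ht P hP) b).mp this
    · intro hb
      funext P
      exact (kap_zero_iff G (ht P P.2) b).mpr (hb P P.2)
lemma loc_finrank {G : MvPolynomial (Fin 2) K} {P : K × K} (hn : IsNodeAt K G P)
    (I : Ideal (MvPolynomial (Fin 2) K ⧸ Ideal.span {G, pderiv 0 G, pderiv 1 G}))
    (hI : I = (mIdl P).map (Ideal.Quotient.mk (Ideal.span {G, pderiv 0 G, pderiv 1 G})))
    [hp : I.IsPrime] :
    Module.finrank K (Localization.AtPrime I) = 1 := by
  have hJle : Ideal.span {G, pderiv 0 G, pderiv 1 G} ≤ mIdl P := Jspan_le_mIdl hn.1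
  have hmk : ∀ f ∈ mIdl P, Ideal.Quotient.mk (Ideal.span {G, pderiv 0 G, pderiv 1 G}) f ∈ I :=
    fun f hf => hI ▸ Ideal.mem_map_of_mem _ hf
  obtain ⟨s, hs0, hs⟩ := node_exists_s hn
  have hsnot : Ideal.Quotient.mk (Ideal.span {G, pderiv 0 G, pderiv 1 G}) s ∉ I := by
    rw [hI]
    intro hmem
    obtain ⟨h, hh, hhs⟩ := (Ideal.mem_map_iff_of_surjective _ Ideal.Quotient.mk_surjective).mp hmem
    have hd : h - s ∈ Ideal.span {G, pderiv 0 G, pderiv 1 G} := Ideal.Quotient.eq.mp hhs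
    have hsm : s ∈ mIdl P := by
      have h3 := hJle hd
      have h2 : s = h - (h - s) := by ring
      rw [h2]; exact sub_mem hh h3
    exact hs0 (mem_mIdl_iff.mp hsm)
  have hkill : ∀ t ∈ I, algebraMap _ (Localization.AtPrime I) t = 0 := by
    intro t ht
    rw [hI] at ht
    obtain ⟨h, hh, rfl⟩ := (Ideal.mem_map_iff_of_surjective _ Ideal.Quotient.mk_surjective).mp ht
    have hu : IsUnit (algebraMap _ (Localization.AtPrime I)
        (Ideal.Quotient.mk (Ideal.span {G, pderiv 0 G, pderiv 1 G}) s)) :=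
      IsLocalization.map_units (Localization.AtPrime I) (⟨_, hsnot⟩ : I.primeCompl)
    have h0 : algebraMap _ (Localization.AtPrime I)
          (Ideal.Quotient.mk (Ideal.span {G, pderiv 0 G, pderiv 1 G}) s) *
        algebraMap _ (Localization.AtPrime I)
          (Ideal.Quotient.mk (Ideal.span {G, pderiv 0 G, pderiv 1 G}) h) = 0 := by
      rw [← map_mul, ← map_mul, Ideal.Quotient.eq_zero_iff_mem.mpr (hs h hh), map_zero]
    exact (hu.mul_right_eq_zero).mp h0
  have halg : ∀ b : MvPolynomial (Fin 2) K ⧸ Ideal.span {G, pderiv 0 G, pderiv 1 G},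
      ∃ c : K, algebraMap _ (Localization.AtPrime I) b = algebraMap K (Localization.AtPrime I) c := by
    intro b
    obtain ⟨f, rfl⟩ := Ideal.Quotient.mk_surjective (I := Ideal.span {G, pderiv 0 G, pderiv 1 G}) b
    refine ⟨eval ![P.1, P.2] f, ?_⟩
    have hdiff : Ideal.Quotient.mk (Ideal.span {G, pderiv 0 G, pderiv 1 G}) f -
        algebraMap K _ (eval ![P.1, P.2] f) ∈ I := by
      rw [show algebraMap K (MvPolynomial (Fin 2) K ⧸ Ideal.span {G, pderiv 0 G, pderiv 1 G})
          (eval ![P.1, P.2] f) =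
        Ideal.Quotient.mk (Ideal.span {G, pderiv 0 G, pderiv 1 G}) (C (eval ![P.1, P.2] f))
        from rfl, ← map_sub]
      exact hmk _ (sub_C_mem_mIdl P f)
    have h0 := hkill _ hdiff
    rw [map_sub, sub_eq_zero] at h0
    rw [h0, ← IsScalarTower.algebraMap_apply]
  have hsurj : Function.Surjective (algebraMap K (Localization.AtPrime I)) := by
    intro z
    obtain ⟨⟨b, t⟩, hzt⟩ := IsLocalization.surj I.primeCompl z
    obtain ⟨cb, hcb⟩ := halg b
    obtain ⟨ct, hct⟩ := halg (t : MvPolynomial (Fin 2) K ⧸ Ideal.span {G, pderiv 0 G, pderiv 1 G})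
    have hut : IsUnit (algebraMap _ (Localization.AtPrime I)
        (t : MvPolynomial (Fin 2) K ⧸ Ideal.span {G, pderiv 0 G, pderiv 1 G})) :=
      IsLocalization.map_units (Localization.AtPrime I) t
    have hct0 : ct ≠ 0 := by
      rintro rfl
      rw [hct, map_zero] at hut
      exact not_isUnit_zero hut
    refine ⟨cb / ct, ?_⟩
    have hu2 : IsUnit (algebraMap K (Localization.AtPrime I) ct) := hct ▸ hut
    apply hu2.mul_right_cancel
    rw [← map_mul, div_mul_cancel₀ _ hct0, ← hcb, ← hzt, hct]
  have hinj : Function.Injective (algebraMap K (Localization.AtPrime I)) := by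
    haveI : Nontrivial (Localization.AtPrime I) := inferInstance
    exact (algebraMap K (Localization.AtPrime I)).injective
  have e : K ≃ₐ[K] (Localization.AtPrime I) :=
    AlgEquiv.ofBijective (Algebra.ofId K (Localization.AtPrime I))
    (by rw [show ⇑(Algebra.ofId K (Localization.AtPrime I))
          = ⇑(algebraMap K (Localization.AtPrime I)) from rfl]
        exact ⟨hinj, hsurj⟩)
  have hfr := e.toLinearEquiv.finrank_eq
  rw [Module.finrank_self] at hfr
  exact hfr.symm

lemma part_b [IsAlgClosed K] {G : MvPolynomial (Fin 2) K}
    (hnodal : ∀ Q : K × K, IsSingAt K G Q → IsNodeAt K G Q) :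
    Module.finrank K (MvPolynomial (Fin 2) K ⧸ Ideal.span {G, pderiv 0 G, pderiv 1 G}) =
      {P : K × K | IsSingAt K G P}.ncard := by
  classical
  by_cases hfin : {P : K × K | IsSingAt K G P}.Finite
  · obtain ⟨Φ, hsurj, hker⟩ := exists_Phi G hfin.toFinset
      (fun P hP => hfin.mem_toFinset.mp hP)
    have hinj : Function.Injective Φ := by
      rw [injective_iff_map_eq_zero]
      intro b hb
      refine key3 hnodal b ?_
      intro P hP
      exact (hker b).mp hb P (hfin.mem_toFinset.mpr hP)
    have e := AlgEquiv.ofBijective Φ ⟨hinj, hsurj⟩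
    rw [e.toLinearEquiv.finrank_eq, Module.finrank_pi, Fintype.card_coe,
      ← Set.ncard_coe_finset, Set.Finite.coe_toFinset]
  · have hinf : {P : K × K | IsSingAt K G P}.Infinite := hfin
    rw [hinf.ncard]
    apply Module.finrank_of_infinite_dimensional
    intro hFD
    obtain ⟨t, htsub, htcard⟩ := hinf.exists_subset_card_eq
      (Module.finrank K (MvPolynomial (Fin 2) K ⧸
        Ideal.span {G, pderiv 0 G, pderiv 1 G}) + 1)
    obtain ⟨Φ, hsurj, -⟩ := exists_Phi G t (fun P hP => htsub hP)
    have hsurj' : Function.Surjective Φ.toLinearMap := hsurj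
    have e2 := (LinearMap.quotKerEquivOfSurjective Φ.toLinearMap hsurj').finrank_eq
    have h3 : Module.finrank K ((P : ↥t) → K) ≤ Module.finrank K
        (MvPolynomial (Fin 2) K ⧸ Ideal.span {G, pderiv 0 G, pderiv 1 G}) := by
      rw [← e2]
      exact Submodule.finrank_quotient_le _
    rw [Module.finrank_pi, Fintype.card_coe, htcard] at h3
    omega

end

/-- If `C_a` is a nodal curve then: (a) for every node `(x₀,y₀)` of `C_a` the localization of
`K[X,Y]/(F_a, (F_a)_X, (F_a)_Y)` at the maximal ideal generated by the images of `X − x₀` and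
`Y − y₀` is a one-dimensional `K`-vector space; (b) `dim_K K[X,Y]/(F_a, (F_a)_X, (F_a)_Y)` is
the number of nodes of `C_a`. -/
theorem dim_of_singular_algebra_of_nodal
    (K : Type) [Field K] [IsAlgClosed K] [CharZero K]
    (p q : ℕ) (hp : 1 < p) (hpq : p < q) (hco : Nat.Coprime p q)
    (a : idxSet p q → K)
    (hnodal : ∀ Q : K × K, IsSingAt K (wPoly K p q a) Q → IsNodeAt K (wPoly K p q a) Q) :
    (∀ x0 y0 : K, IsNodeAt K (wPoly K p q a) (x0, y0) →
      ∀ (hM : (ptIdeal K p q a x0 y0).IsMaximal),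
        Module.finrank K
          (Localization.AtPrime (ptIdeal K p q a x0 y0) (hp := hM.isPrime)) = 1) ∧
    Module.finrank K (curveSingAlg K p q a) =
      {P : K × K | IsNodeAt K (wPoly K p q a) P}.ncard := by
  classical
  set G := wPoly K p q a with hG
  have hPt : ∀ x0 y0 : K, ptIdeal K p q a x0 y0 =
      (mIdl (x0, y0)).map (Ideal.Quotient.mk (Ideal.span {G, pderiv 0 G, pderiv 1 G})) := by
    intro x0 y0
    rw [ptIdeal, mIdl, Ideal.map_span, Set.image_pair]
  constructor
  · intro x0 y0 hnode hM
    haveI := hM.isPrime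
    exact loc_finrank (hp := hM.isPrime) hnode _ (hPt x0 y0)
  · have hset : {P : K × K | IsNodeAt K G P} = {P : K × K | IsSingAt K G P} := by
      ext P
      exact ⟨fun h => h.1, fun h => hnodal P h⟩
    rw [hset]
    exact part_b hnodal
end
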